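/- arXiv:2301.01833 — 5 statements merged into one kernel-verified Lean document; each statement's English description precedes it below -/
import Mathlib

section
/- With notation as in the multivariate Hermite interpolation setup, if f ∈ V(A, ν) satisfies ∂^m f(a) = 0 for every grid point a ∈ A = A₁×…×A_n and every multi-index m with 0 ≤ m_i ≤ ν_i(a_i) − 1, then f = 0. -/
open MvPolynomial Polynomial

set_option linter.unusedSectionVars false


/-- The iterated mixed partial derivative operator `∂^m = ∂₁^{m₁} ⋯ ∂ₙ^{mₙ}` on
multivariate polynomials. -/
noncomputable def pd {K : Type*} [CommSemiring K] {n : ℕ} (m : Fin n → ℕ)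
    (f : MvPolynomial (Fin n) K) : MvPolynomial (Fin n) K :=
  (List.finRange n).foldl (fun g i => (fun h => MvPolynomial.pderiv i h)^[m i] g) f

section Aux

variable {K : Type*} [Field K] [CharZero K] {n : ℕ}

lemma fse_pderiv_zero (f : MvPolynomial (Fin (n + 1)) K) :
    MvPolynomial.finSuccEquiv K n (MvPolynomial.pderiv 0 f) =
      Polynomial.derivative (MvPolynomial.finSuccEquiv K n f) := by
  induction f using MvPolynomial.induction_on with
  | C a => simp [MvPolynomial.finSuccEquiv_apply]
  | add p q hp hq => simp [map_add, hp, hq]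
  | mul_X p i hp =>
    rw [MvPolynomial.pderiv_mul, map_add, map_mul, map_mul, hp, map_mul]
    cases i using Fin.cases with
    | zero =>
      simp [MvPolynomial.pderiv_X_self, MvPolynomial.finSuccEquiv_X_zero, Polynomial.derivative_mul]
    | succ j =>
      simp [MvPolynomial.pderiv_X_of_ne (Fin.succ_ne_zero j), MvPolynomial.finSuccEquiv_X_succ,
        Polynomial.derivative_mul]

noncomputable def ev0 (t : K) : MvPolynomial (Fin (n + 1)) K →+* MvPolynomial (Fin n) K :=
  (Polynomial.evalRingHom (MvPolynomial.C t)).comp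
    (MvPolynomial.finSuccEquiv K n).toAlgHom.toRingHom

lemma ev0_apply (t : K) (f : MvPolynomial (Fin (n + 1)) K) :
    ev0 t f = Polynomial.eval (MvPolynomial.C t) (MvPolynomial.finSuccEquiv K n f) := rfl

lemma ev0_C (t : K) (a : K) : ev0 (n := n) t (MvPolynomial.C a) = MvPolynomial.C a := by
  simp [ev0_apply, MvPolynomial.finSuccEquiv_apply]

lemma ev0_X_zero (t : K) : ev0 (n := n) t (MvPolynomial.X 0) = MvPolynomial.C t := by
  simp [ev0_apply, MvPolynomial.finSuccEquiv_X_zero]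

lemma ev0_X_succ (t : K) (k : Fin n) : ev0 t (MvPolynomial.X k.succ) = MvPolynomial.X k := by
  simp [ev0_apply, MvPolynomial.finSuccEquiv_X_succ]

lemma ev0_pderiv_succ (t : K) (j : Fin n) (f : MvPolynomial (Fin (n + 1)) K) :
    ev0 t (MvPolynomial.pderiv j.succ f) = MvPolynomial.pderiv j (ev0 t f) := by
  induction f using MvPolynomial.induction_on with
  | C a => simp [ev0_C]
  | add p q hp hq => simp [map_add, hp, hq]
  | mul_X p i hp =>
    rw [MvPolynomial.pderiv_mul, map_add, map_mul, map_mul, hp, map_mul]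
    cases i using Fin.cases with
    | zero =>
      simp only [MvPolynomial.pderiv_X_of_ne (Fin.succ_ne_zero j).symm, ev0_X_zero,
        MvPolynomial.pderiv_mul, mul_zero, add_zero, MvPolynomial.pderiv_C, zero_add, map_zero]
    | succ k =>
      by_cases hjk : j = k
      · subst hjk
        simp only [MvPolynomial.pderiv_X_self, ev0_X_succ, MvPolynomial.pderiv_mul, mul_one,
          map_one]
      · simp only [MvPolynomial.pderiv_X_of_ne (fun h => hjk (Fin.succ_injective _ h).symm),
          MvPolynomial.pderiv_X_of_ne (Ne.symm hjk), ev0_X_succ, MvPolynomial.pderiv_mul,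
          mul_zero, add_zero, map_zero]

lemma ev0_pderiv_succ_iter (t : K) (j : Fin n) (k : ℕ) (f : MvPolynomial (Fin (n + 1)) K) :
    ev0 t ((fun h => MvPolynomial.pderiv j.succ h)^[k] f) =
      (fun h => MvPolynomial.pderiv j h)^[k] (ev0 t f) := by
  induction k generalizing f with
  | zero => rfl
  | succ k ih =>
    rw [Function.iterate_succ_apply, Function.iterate_succ_apply, ih, ev0_pderiv_succ]

lemma eval_ev0 (t : K) (b : Fin n → K) (f : MvPolynomial (Fin (n + 1)) K) :
    MvPolynomial.eval b (ev0 t f) = MvPolynomial.eval (Fin.cons t b) f := by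
  induction f using MvPolynomial.induction_on with
  | C a => simp [ev0_C]
  | add p q hp hq => simp [map_add, hp, hq]
  | mul_X p i hp =>
    rw [map_mul, map_mul, map_mul, hp]
    cases i using Fin.cases with
    | zero => simp [ev0_X_zero]
    | succ k => simp [ev0_X_succ]

end Aux
set_option linter.unusedSectionVars false

section Aux2

variable {K : Type*} [Field K] [CharZero K] {n : ℕ}

lemma pd_zero_eq (m : Fin 0 → ℕ) (f : MvPolynomial (Fin 0) K) : pd m f = f := by
  simp [pd]

lemma pd_succ_eq (m : Fin (n + 1) → ℕ) (f : MvPolynomial (Fin (n + 1)) K) :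
    pd m f = (List.finRange n).foldl
        (fun g j => (fun h => MvPolynomial.pderiv j.succ h)^[m j.succ] g)
        ((fun h => MvPolynomial.pderiv (0 : Fin (n + 1)) h)^[m 0] f) := by
  rw [pd, List.finRange_succ, List.foldl_cons, List.foldl_map]

lemma ev0_foldl (t : K) (m : Fin n → ℕ) (l : List (Fin n)) (f : MvPolynomial (Fin (n + 1)) K) :
    ev0 t (l.foldl (fun g j => (fun h => MvPolynomial.pderiv j.succ h)^[m j] g) f) =
      l.foldl (fun g j => (fun h => MvPolynomial.pderiv j h)^[m j] g) (ev0 t f) := by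
  induction l generalizing f with
  | nil => rfl
  | cons j l ih => rw [List.foldl_cons, List.foldl_cons, ih, ev0_pderiv_succ_iter]

lemma ev0_pd_cons (t : K) (m0 : ℕ) (m : Fin n → ℕ) (f : MvPolynomial (Fin (n + 1)) K) :
    ev0 t (pd (Fin.cons m0 m) f) =
      pd m (ev0 t ((fun h => MvPolynomial.pderiv (0 : Fin (n + 1)) h)^[m0] f)) := by
  rw [pd_succ_eq, pd]
  simp only [Fin.cons_succ, Fin.cons_zero]
  exact ev0_foldl t m _ _

lemma fse_pderiv_zero_iter (m0 : ℕ) (f : MvPolynomial (Fin (n + 1)) K) :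
    MvPolynomial.finSuccEquiv K n ((fun h => MvPolynomial.pderiv (0 : Fin (n + 1)) h)^[m0] f) =
      Polynomial.derivative^[m0] (MvPolynomial.finSuccEquiv K n f) := by
  induction m0 generalizing f with
  | zero => rfl
  | succ k ih =>
    simp only [Function.iterate_succ_apply, ih, fse_pderiv_zero]

lemma degreeOf_nsmul_le (c : ℕ) (j : Fin n) (q : MvPolynomial (Fin n) K) :
    MvPolynomial.degreeOf j (c • q) ≤ MvPolynomial.degreeOf j q := by
  have : (c • q) = MvPolynomial.C (c : K) * q := by
    rw [nsmul_eq_mul, map_natCast (MvPolynomial.C : K →+* MvPolynomial (Fin n) K) c]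
  rw [this]
  exact MvPolynomial.degreeOf_C_mul_le q j _

lemma degreeOf_evalC_le (t : K) (j : Fin n) (P : Polynomial (MvPolynomial (Fin n) K)) (d : ℕ)
    (hc : ∀ i, MvPolynomial.degreeOf j (P.coeff i) ≤ d) :
    MvPolynomial.degreeOf j (Polynomial.eval (MvPolynomial.C t) P) ≤ d := by
  rw [Polynomial.eval_eq_sum_range]
  refine (MvPolynomial.degreeOf_sum_le _ _ _).trans (Finset.sup_le fun i _ => ?_)
  refine (MvPolynomial.degreeOf_mul_le _ _ _).trans ?_
  have h2 : MvPolynomial.degreeOf j ((MvPolynomial.C t : MvPolynomial (Fin n) K) ^ i) = 0 := by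
    rw [← map_pow, MvPolynomial.degreeOf_C]
  rw [h2, add_zero]
  exact hc i

end Aux2

theorem key {K : Type*} [Field K] [CharZero K] :
    ∀ (n : ℕ) (A : Fin n → Finset K) (ν : Fin n → K → ℕ),
      (∀ i, ∀ a ∈ A i, 0 < ν i a) →
      ∀ f : MvPolynomial (Fin n) K,
      (∀ i, f.degreeOf i < ∑ a ∈ A i, ν i a) →
      (∀ a : Fin n → K, (∀ i, a i ∈ A i) →
        ∀ m : Fin n → ℕ, (∀ i, m i < ν i (a i)) → MvPolynomial.eval a (pd m f) = 0) →
      f = 0 := by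
  intro n
  induction n with
  | zero =>
    intro A ν hν f hdeg hvanish
    have h0 := hvanish Fin.elim0 (fun i => i.elim0) Fin.elim0 (fun i => i.elim0)
    rw [pd_zero_eq] at h0
    rw [MvPolynomial.eq_C_of_isEmpty f] at h0 ⊢
    rw [MvPolynomial.eval_C] at h0
    rw [h0, map_zero]
  | succ n IH =>
    intro A ν hν f hdeg hvanish
    by_contra hf
    set F := MvPolynomial.finSuccEquiv K n f with hF_def
    have hF : F ≠ 0 := fun h => hf ((MvPolynomial.finSuccEquiv K n).injective
      (by rw [map_zero, ← hF_def, h]))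
    -- the partially evaluated derivative polynomials vanish
    have hg : ∀ t ∈ A 0, ∀ m0 < ν 0 t,
        ev0 t ((fun h => MvPolynomial.pderiv (0 : Fin (n + 1)) h)^[m0] f) = 0 := by
      intro t ht m0 hm0
      apply IH (fun j => A j.succ) (fun j => ν j.succ) (fun j => hν j.succ)
      · -- degree bound
        intro j
        refine lt_of_le_of_lt ?_ (hdeg j.succ)
        rw [ev0_apply]
        refine degreeOf_evalC_le t j _ _ (fun i => ?_)
        rw [fse_pderiv_zero_iter, Polynomial.coeff_iterate_derivative]
        refine (degreeOf_nsmul_le _ _ _).trans ?_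
        exact MvPolynomial.degreeOf_coeff_finSuccEquiv f j (i + m0)
      · -- vanishing
        intro b hb m hm
        rw [← ev0_pd_cons, eval_ev0]
        refine hvanish (Fin.cons t b) ?_ (Fin.cons m0 m) ?_
        · intro i
          refine Fin.cases ?_ ?_ i
          · simpa using ht
          · intro j; simpa using hb j
        · intro i
          refine Fin.cases ?_ ?_ i
          · simpa using hm0
          · intro j; simpa using hm j
    -- root multiplicities
    have hroot : ∀ t ∈ A 0, ν 0 t ≤ F.rootMultiplicity (MvPolynomial.C t) := by
      intro t ht
      have hlt : ν 0 t - 1 < F.rootMultiplicity (MvPolynomial.C t) := by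
        refine Polynomial.lt_rootMultiplicity_of_isRoot_iterate_derivative_of_mem_nonZeroDivisors'
          hF (fun m0 hm0 => ?_) (fun m _ hm => mem_nonZeroDivisors_of_ne_zero
            (Nat.cast_ne_zero.mpr hm))
        have := hg t ht m0 (by have := hν 0 t ht; omega)
        rw [ev0_apply, fse_pderiv_zero_iter] at this
        exact this
      omega
    -- divisibility
    have hdvd : (∏ t ∈ A 0, (Polynomial.X - Polynomial.C (MvPolynomial.C t)) ^ ν 0 t) ∣ F := by
      refine Finset.prod_dvd_of_coprime ?_ (fun t ht => ?_)
      · intro t1 ht1 t2 ht2 hne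
        refine IsCoprime.pow ?_
        refine Polynomial.isCoprime_X_sub_C_of_isUnit_sub ?_
        rw [← map_sub]
        exact (IsUnit.map MvPolynomial.C (sub_ne_zero.mpr hne).isUnit)
      · exact (pow_dvd_pow _ (hroot t ht)).trans (Polynomial.pow_rootMultiplicity_dvd F _)
    -- degree contradiction
    have hdegprod : (∏ t ∈ A 0, (Polynomial.X -
        Polynomial.C (MvPolynomial.C t : MvPolynomial (Fin n) K)) ^ ν 0 t).natDegree
        = ∑ t ∈ A 0, ν 0 t := by
      rw [Polynomial.natDegree_prod _ _ (fun t _ => pow_ne_zero _ (Polynomial.X_sub_C_ne_zero _))]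
      exact Finset.sum_congr rfl fun t _ => by
        rw [Polynomial.natDegree_pow, Polynomial.natDegree_X_sub_C, mul_one]
    have hle := Polynomial.natDegree_le_of_dvd hdvd hF
    rw [hdegprod] at hle
    rw [hF_def, MvPolynomial.natDegree_finSuccEquiv] at hle
    have := hdeg 0
    omega


/-- If `f ∈ V(A, ν)` (i.e. `deg_{x_i} f < ∑_{a ∈ A_i} ν_i(a)` for every `i`) and all
mixed partial derivatives `∂^m f` with `m_i < ν_i(a_i)` vanish at every grid point
`a ∈ A₁ × ⋯ × A_n`, then `f = 0`. -/
theorem stmt3 {K : Type*} [Field K] [CharZero K] {n : ℕ}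
    (A : Fin n → Finset K) (ν : Fin n → K → ℕ) (hν : ∀ i, ∀ a ∈ A i, 0 < ν i a)
    (f : MvPolynomial (Fin n) K)
    (hdeg : ∀ i, f.degreeOf i < ∑ a ∈ A i, ν i a)
    (hvanish : ∀ a : Fin n → K, (∀ i, a i ∈ A i) →
      ∀ m : Fin n → ℕ, (∀ i, m i < ν i (a i)) →
        MvPolynomial.eval a (pd m f) = 0) :
    f = 0 :=
  key n A ν hν f hdeg hvanish
end

section
/- For any polynomial f ∈ k[x₁,…,x_n] and nonzero univariate polynomials f_i ∈ k[x_i], there exist unique scalars c_{(k₁,…,k_n)} ∈ k for 0 ≤ k_i < deg f_i such that f − ∑ c_{(k₁,…,k_n)} x₁^{k₁} ⋯ x_n^{k_n} belongs to the ideal (f₁(x₁), …, f_n(x_n)). -/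
/-- The ideal `(f₁(x₁), …, f_n(x_n))` of `k[x₁,…,x_n]` generated by univariate
polynomials `f_i` in the variables `x_i`. -/
noncomputable def boxIdeal {K : Type*} [Field K] {n : ℕ} (p : Fin n → Polynomial K) :
    Ideal (MvPolynomial (Fin n) K) :=
  Ideal.span (Set.range fun i => Polynomial.aeval (MvPolynomial.X i) (p i))

open Polynomial in
/-- Membership in `(P) ⊔ J·R[X]` for monic `P` is detected by the remainder. -/
lemma key_mem_iff {R : Type*} [CommRing R] (J : Ideal R) {P : R[X]} (hP : P.Monic)
    (F : R[X]) :
    F ∈ Ideal.span {P} ⊔ J.map Polynomial.C ↔ F %ₘ P ∈ J.map Polynomial.C := by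
  have hmapzero : ∀ g : R[X], g ∈ J.map Polynomial.C ↔
      g.map (Ideal.Quotient.mk J) = 0 := by
    intro g
    rw [Ideal.mem_map_C_iff, Polynomial.ext_iff]
    simp [Polynomial.coeff_map, Ideal.Quotient.eq_zero_iff_mem]
  constructor
  · intro hF
    rw [hmapzero, Polynomial.map_modByMonic _ hP]
    rw [Polynomial.modByMonic_eq_zero_iff_dvd (hP.map _)]
    rcases Submodule.mem_sup.1 hF with ⟨a, ha, b, hb, rfl⟩
    rcases Ideal.mem_span_singleton.1 ha with ⟨q, rfl⟩
    rw [Polynomial.map_add, (hmapzero b).1 hb, add_zero, Polynomial.map_mul]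
    exact Dvd.intro _ rfl
  · intro hF
    have h2 : F = P * (F /ₘ P) + F %ₘ P := by
      rw [add_comm, Polynomial.modByMonic_add_div F P]
    rw [h2]
    exact Submodule.add_mem_sup (Ideal.mem_span_singleton.2 ⟨_, rfl⟩) hF

open Polynomial MvPolynomial in
lemma boxIdeal_succ {K : Type*} [Field K] {n : ℕ} (p : Fin (n + 1) → Polynomial K)
    (F : MvPolynomial (Fin (n + 1)) K) :
    F ∈ boxIdeal p ↔ (MvPolynomial.finSuccEquiv K n) F ∈
      Ideal.span {Polynomial.aeval (Polynomial.X : (MvPolynomial (Fin n) K)[X]) (p 0)} ⊔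
        (boxIdeal (fun i => p i.succ)).map Polynomial.C := by
  set e := MvPolynomial.finSuccEquiv K n with he
  have hgen0 : e (Polynomial.aeval (X (0 : Fin (n+1))) (p 0)) =
      Polynomial.aeval (Polynomial.X : (MvPolynomial (Fin n) K)[X]) (p 0) := by
    rw [← Polynomial.aeval_algHom_apply, MvPolynomial.finSuccEquiv_X_zero]
  have hgens : ∀ i : Fin n, e (Polynomial.aeval (X i.succ) (p i.succ)) =
      Polynomial.C (Polynomial.aeval (X i) (p i.succ)) := by
    intro i
    rw [← Polynomial.aeval_algHom_apply, MvPolynomial.finSuccEquiv_X_succ]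
    exact (Polynomial.aeval_algHom_apply Polynomial.CAlgHom (X i) (p i.succ)).symm.symm
  have hmap : Ideal.map e (boxIdeal p) =
      Ideal.span {Polynomial.aeval (Polynomial.X : (MvPolynomial (Fin n) K)[X]) (p 0)} ⊔
        (boxIdeal (fun i => p i.succ)).map Polynomial.C := by
    rw [boxIdeal, Ideal.map_span]
    apply le_antisymm
    · rw [Ideal.span_le]
      rintro _ ⟨_, ⟨i, rfl⟩, rfl⟩
      induction i using Fin.cases with
      | zero =>
        exact Submodule.mem_sup_left (hgen0 ▸ Ideal.subset_span rfl)
      | succ i =>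
        refine Submodule.mem_sup_right ?_
        rw [hgens i]
        exact Ideal.mem_map_of_mem _ (Ideal.subset_span ⟨i, rfl⟩)
    · apply sup_le
      · exact Ideal.span_le.2 (Set.singleton_subset_iff.2
          (Ideal.subset_span ⟨_, ⟨0, rfl⟩, hgen0⟩))
      · rw [boxIdeal, Ideal.map_span, Ideal.span_le]
        rintro _ ⟨_, ⟨i, rfl⟩, rfl⟩
        exact Ideal.subset_span ⟨_, ⟨i.succ, rfl⟩, hgens i⟩
  constructor
  · intro h
    rw [← hmap]
    exact Ideal.mem_map_of_mem _ h
  · intro h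
    rw [← hmap, Ideal.mem_map_iff_of_surjective _ e.surjective] at h
    obtain ⟨x, hx, hxe⟩ := h
    rwa [← e.injective hxe]

open Polynomial in
lemma main_aux {K : Type*} [Field K] : ∀ (n : ℕ) (d : Fin n → ℕ) (p : Fin n → Polynomial K),
    (∀ i, (p i).Monic) → (∀ i, (p i).natDegree = d i) → ∀ f : MvPolynomial (Fin n) K,
    ∃! c : (∀ i, Fin (d i)) → K,
      f - ∑ kk : (∀ i, Fin (d i)),
          MvPolynomial.C (c kk) * ∏ i, MvPolynomial.X i ^ (kk i : ℕ) ∈ boxIdeal p := by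
  intro n
  induction n with
  | zero =>
    intro d p hm hd f
    obtain ⟨a, rfl⟩ := MvPolynomial.C_surjective (Fin 0) f
    have hbot : boxIdeal p = ⊥ := by
      rw [boxIdeal, Set.range_eq_empty, Ideal.span_empty]
    have hsum : ∀ y : (∀ i : Fin 0, Fin (d i)) → K,
        ∑ kk : (∀ i : Fin 0, Fin (d i)),
            MvPolynomial.C (y kk) * ∏ i, MvPolynomial.X i ^ (kk i : ℕ)
          = MvPolynomial.C (y default) := by
      intro y
      rw [Finset.univ_unique, Finset.sum_singleton]
      simp
    refine ⟨fun _ => a, ?_, ?_⟩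
    · dsimp only
      rw [hsum, hbot, Ideal.mem_bot, sub_eq_zero]
    · intro y hy
      rw [hsum, hbot, Ideal.mem_bot, sub_eq_zero] at hy
      have := MvPolynomial.C_injective (Fin 0) K hy
      funext t
      rw [Subsingleton.elim t default, this]
  | succ n ih =>
    intro d p hm hd f
    classical
    set R := MvPolynomial (Fin n) K with hR
    set e := MvPolynomial.finSuccEquiv K n with he
    set A := Polynomial.aeval (Polynomial.X : (MvPolynomial (Fin n) K)[X]) (p 0) with hA
    have hAmap : A = (p 0).map (algebraMap K R) := by
      have h1 : (Polynomial.aeval (Polynomial.X : R[X]) : K[X] →ₐ[K] R[X])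
          = Polynomial.mapAlgHom (Algebra.ofId K R) := by
        apply Polynomial.algHom_ext
        simp
      rw [hA]
      rw [show Polynomial.aeval (Polynomial.X : R[X]) (p 0)
        = (Polynomial.aeval (Polynomial.X : R[X]) : K[X] →ₐ[K] R[X]) (p 0) from rfl, h1]
      rfl
    have hAmonic : A.Monic := hAmap ▸ (hm 0).map _
    have hAdeg : A.natDegree = d 0 := by
      rw [hAmap, (hm 0).natDegree_map, hd 0]
    have hAdeg' : A.degree = (d 0 : ℕ) := by
      rw [Polynomial.degree_eq_natDegree hAmonic.ne_zero, hAdeg]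
    set J := boxIdeal (fun i => p i.succ) with hJ
    set r := (e f) %ₘ A with hr
    -- the image of the candidate sum under e
    have heC : ∀ a : K, e (MvPolynomial.C a) = Polynomial.C (MvPolynomial.C a) := by
      intro a
      rw [show (MvPolynomial.C a : MvPolynomial (Fin (n+1)) K) = algebraMap K _ a from rfl,
        AlgEquiv.commutes]
      rfl
    have hS : ∀ c : (∀ i, Fin (d i)) → K,
        e (∑ kk : ∀ i, Fin (d i),
            MvPolynomial.C (c kk) * ∏ i, MvPolynomial.X i ^ (kk i : ℕ))
        = ∑ j : Fin (d 0), Polynomial.C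
            (∑ t : (∀ i : Fin n, Fin (d i.succ)),
              MvPolynomial.C (c (Fin.cons j t)) * ∏ i, MvPolynomial.X i ^ (t i : ℕ))
            * Polynomial.X ^ (j : ℕ) := by
      intro c
      rw [map_sum, ← Equiv.sum_comp (Fin.consEquiv (fun i => Fin (d i))),
        Fintype.sum_prod_type]
      refine Finset.sum_congr rfl fun j _ => ?_
      rw [map_sum, Finset.sum_mul]
      refine Finset.sum_congr rfl fun t _ => ?_
      show e (MvPolynomial.C (c (Fin.cons j t)) *
          ∏ i : Fin (n+1), MvPolynomial.X i ^ ((Fin.cons j t : ∀ i, Fin (d i)) i : ℕ)) = _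
      rw [map_mul, heC, map_prod, Fin.prod_univ_succ]
      simp only [he, map_pow, MvPolynomial.finSuccEquiv_X_zero, MvPolynomial.finSuccEquiv_X_succ,
        Fin.cons_zero, Fin.cons_succ]
      have hCprod : ∏ i : Fin n, (Polynomial.C (MvPolynomial.X i : MvPolynomial (Fin n) K)) ^ (t i : ℕ)
          = Polynomial.C (∏ i : Fin n, (MvPolynomial.X i : MvPolynomial (Fin n) K) ^ (t i : ℕ)) := by
        rw [map_prod]
        exact Finset.prod_congr rfl fun i _ => (map_pow _ _ _).symm
      rw [hCprod, map_mul (Polynomial.C)]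
      ring
    -- the key characterization
    have hchar : ∀ c : (∀ i, Fin (d i)) → K,
        (f - ∑ kk : (∀ i, Fin (d i)),
            MvPolynomial.C (c kk) * ∏ i, MvPolynomial.X i ^ (kk i : ℕ) ∈ boxIdeal p) ↔
        ∀ j : Fin (d 0), r.coeff j -
            (∑ t : (∀ i : Fin n, Fin (d i.succ)),
              MvPolynomial.C (c (Fin.cons j t)) * ∏ i, MvPolynomial.X i ^ (t i : ℕ)) ∈ J := by
      intro c
      set T : Fin (d 0) → R := fun j => ∑ t : (∀ i : Fin n, Fin (d i.succ)),
          MvPolynomial.C (c (Fin.cons j t)) * ∏ i, MvPolynomial.X i ^ (t i : ℕ) with hT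
      have hdegS : (∑ j : Fin (d 0), Polynomial.C (T j) * Polynomial.X ^ (j : ℕ)).degree
          < A.degree := by
        rw [hAdeg']
        refine lt_of_le_of_lt (Polynomial.degree_sum_le _ _) ?_
        rw [Finset.sup_lt_iff (by exact WithBot.bot_lt_coe _)]
        intro j _
        exact lt_of_le_of_lt (Polynomial.degree_C_mul_X_pow_le _ _)
          (by exact_mod_cast j.isLt)
      have coeffS : ∀ m : ℕ, (∑ j : Fin (d 0),
          Polynomial.C (T j) * Polynomial.X ^ (j : ℕ)).coeff m
          = if h : m < d 0 then T ⟨m, h⟩ else 0 := by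
        intro m
        rw [Polynomial.finset_sum_coeff]
        split
        · next h =>
          rw [Finset.sum_eq_single (⟨m, h⟩ : Fin (d 0))]
          · rw [Polynomial.coeff_C_mul_X_pow]
            simp
          · intro b _ hb
            rw [Polynomial.coeff_C_mul_X_pow, if_neg]
            intro hmb
            exact hb (Fin.ext hmb.symm)
          · simp
        · next h =>
          apply Finset.sum_eq_zero
          intro j _
          rw [Polynomial.coeff_C_mul_X_pow, if_neg]
          intro hmj
          exact h (hmj ▸ j.isLt)
      rw [boxIdeal_succ, ← he, ← hA, ← hJ, map_sub, hS c, key_mem_iff J hAmonic,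
        Polynomial.sub_modByMonic, ← hr,
        (Polynomial.modByMonic_eq_self_iff hAmonic).2 hdegS, Ideal.mem_map_C_iff]
      constructor
      · intro h j
        have := h j
        rwa [Polynomial.coeff_sub, coeffS, dif_pos j.isLt, Fin.eta] at this
      · intro h m
        rw [Polynomial.coeff_sub, coeffS]
        split
        · next hm0 => exact h ⟨m, hm0⟩
        · next hm0 =>
          rw [Polynomial.coeff_eq_zero_of_degree_lt, sub_zero]
          · exact J.zero_mem
          · rw [hr]
            refine lt_of_lt_of_le (Polynomial.degree_modByMonic_lt _ hAmonic) ?_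
            rw [hAdeg']
            exact_mod_cast le_of_not_gt hm0
    -- apply the induction hypothesis to each coefficient of r
    have IH : ∀ g : R, ∃! c' : (∀ i : Fin n, Fin (d i.succ)) → K,
        g - ∑ t : (∀ i : Fin n, Fin (d i.succ)),
            MvPolynomial.C (c' t) * ∏ i, MvPolynomial.X i ^ (t i : ℕ) ∈ J :=
      fun g => ih (fun i => d i.succ) (fun i => p i.succ) (fun i => hm _) (fun i => hd _) g
    set c₀ : (∀ i, Fin (d i)) → K :=
      fun kk => (IH (r.coeff (kk 0))).choose (fun i => kk i.succ) with hc₀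
    have hcc : ∀ (j : Fin (d 0)) (t : ∀ i : Fin n, Fin (d i.succ)),
        c₀ (Fin.cons j t) = (IH (r.coeff j)).choose t := by
      intro j t
      rw [hc₀]
      simp only [Fin.cons_zero, Fin.cons_succ]
      rfl
    refine ⟨c₀, ?_, ?_⟩
    · refine (hchar c₀).mpr fun j => ?_
      simp only [hcc]
      exact (IH (r.coeff j)).choose_spec.1
    · intro y hy
      replace hy := (hchar y).mp hy
      funext kk
      have h1 := (IH (r.coeff (kk 0))).choose_spec.2 (fun t => y (Fin.cons (kk 0) t)) (hy (kk 0))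
      have h2 : y kk = y (Fin.cons (kk 0) (fun i => kk i.succ)) := by
        congr 1
        exact (Fin.cons_self_tail kk).symm
      rw [h2, hc₀]
      exact congrFun h1 (fun i => kk i.succ)

/-- For every `f ∈ k[x₁,…,x_n]` there exist unique scalars `c_{(k₁,…,k_n)}`,
indexed by the multi-indices with `0 ≤ k_i < deg f_i`, such that
`f − ∑ c_k · x₁^{k₁} ⋯ x_n^{k_n}` lies in the ideal `(f₁(x₁), …, f_n(x_n))`. -/
theorem stmt7 {K : Type*} [Field K] {n : ℕ} (p : Fin n → Polynomial K)
    (hp : ∀ i, p i ≠ 0) (f : MvPolynomial (Fin n) K) :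
    ∃! c : (∀ i, Fin (p i).natDegree) → K,
      f - ∑ kk : (∀ i, Fin (p i).natDegree),
          MvPolynomial.C (c kk) * ∏ i, MvPolynomial.X i ^ (kk i : ℕ) ∈
        boxIdeal p := by
  classical
  set q : Fin n → Polynomial K := fun i => p i * Polynomial.C ((p i).leadingCoeff)⁻¹ with hq
  have hmon : ∀ i, (q i).Monic := fun i => Polynomial.monic_mul_leadingCoeff_inv (hp i)
  have hdeg : ∀ i, (q i).natDegree = (p i).natDegree := fun i =>
    Polynomial.natDegree_eq_of_degree_eq (Polynomial.degree_mul_leadingCoeff_inv _ (hp i))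
  have hgen : ∀ i, Polynomial.aeval (MvPolynomial.X i : MvPolynomial (Fin n) K) (q i)
      = Polynomial.aeval (MvPolynomial.X i) (p i) *
          MvPolynomial.C ((p i).leadingCoeff)⁻¹ := by
    intro i
    simp [hq, map_mul, Polynomial.aeval_C, MvPolynomial.algebraMap_eq]
  have hbox : boxIdeal q = boxIdeal p := by
    apply le_antisymm
    · rw [boxIdeal, Ideal.span_le]
      rintro _ ⟨i, rfl⟩
      show Polynomial.aeval (MvPolynomial.X i) (q i) ∈ boxIdeal p
      rw [hgen i]
      exact Ideal.mul_mem_right _ _ (Ideal.subset_span ⟨i, rfl⟩)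
    · rw [boxIdeal, Ideal.span_le]
      rintro _ ⟨i, rfl⟩
      show Polynomial.aeval (MvPolynomial.X i) (p i) ∈ boxIdeal q
      have hpi : Polynomial.aeval (MvPolynomial.X i : MvPolynomial (Fin n) K) (p i)
          = Polynomial.aeval (MvPolynomial.X i) (q i) * MvPolynomial.C ((p i).leadingCoeff) := by
        rw [hgen i, mul_assoc, ← map_mul,
          inv_mul_cancel₀ (Polynomial.leadingCoeff_ne_zero.mpr (hp i)), map_one, mul_one]
      rw [hpi]
      exact Ideal.mul_mem_right _ _ (Ideal.subset_span ⟨i, rfl⟩)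
  have h := main_aux n (fun i => (p i).natDegree) q hmon hdeg f
  rwa [hbox] at h
end

section
/- Let H_i(x_i) = ∏_{a ∈ A_i} (x_i − a)^{ν_i(a)} for finite subsets A_i of a field k of characteristic zero. Then a polynomial f ∈ k[x₁,…,x_n] belongs to the ideal (H₁,…,H_n) if and only if ∂^m f(a) = 0 for every grid point a ∈ A₁×…×A_n and every multi-index m with 0 ≤ m_i ≤ ν_i(a_i) − 1. -/
open MvPolynomial

section Aux

variable {K : Type*} [CommSemiring K] {n : ℕ}

lemma iter_pderiv_add (i : Fin n) (k : ℕ) (f g : MvPolynomial (Fin n) K) :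
    (fun h => pderiv i h)^[k] (f + g)
      = (fun h => pderiv i h)^[k] f + (fun h => pderiv i h)^[k] g := by
  induction k generalizing f g with
  | zero => simp
  | succ k ih => simp [Function.iterate_succ_apply, map_add, ih]

lemma pd_add (m : Fin n → ℕ) (f g : MvPolynomial (Fin n) K) :
    pd m (f + g) = pd m f + pd m g := by
  unfold pd
  generalize (List.finRange n) = L
  induction L generalizing f g with
  | nil => simp
  | cons i L ih => simp only [List.foldl_cons, iter_pderiv_add, ih]

lemma iter_pderiv_monomial (i : Fin n) (k : ℕ) (s : Fin n →₀ ℕ) (c : K) :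
    (fun h => pderiv i h)^[k] (monomial s c)
      = monomial (s - Finsupp.single i k) (c * ((s i).descFactorial k : ℕ)) := by
  induction k with
  | zero => simp
  | succ k ih =>
      rw [Function.iterate_succ_apply', ih, pderiv_monomial]
      have h1 : (s - Finsupp.single i k) - Finsupp.single i 1
          = s - Finsupp.single i (k + 1) := by
        rw [tsub_tsub, ← Finsupp.single_add]
      have h2 : (s - Finsupp.single i k) i = s i - k := by
        simp [Finsupp.tsub_apply]
      rw [h1, h2, Nat.descFactorial_succ]
      congr 1
      push_cast
      ring

lemma foldl_pderiv_monomial (m : Fin n → ℕ) (L : List (Fin n)) (hL : L.Nodup)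
    (s : Fin n →₀ ℕ) (c : K) :
    L.foldl (fun g i => (fun h => pderiv i h)^[m i] g) (monomial s c)
      = monomial (s - ∑ i ∈ L.toFinset, Finsupp.single i (m i))
          (c * ((∏ i ∈ L.toFinset, (s i).descFactorial (m i) : ℕ) : K)) := by
  induction L generalizing s c with
  | nil => simp
  | cons i L ih =>
      have hiL : i ∉ L := (List.nodup_cons.mp hL).1
      have hLn : L.Nodup := (List.nodup_cons.mp hL).2
      rw [List.foldl_cons, iter_pderiv_monomial, ih hLn]
      have htF : (i :: L).toFinset = insert i L.toFinset := by simp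
      have hiF : i ∉ L.toFinset := by simpa using hiL
      rw [htF, Finset.sum_insert hiF, Finset.prod_insert hiF]
      congr 1
      · rw [tsub_tsub]
      · have hval : ∀ j ∈ L.toFinset, ((s - Finsupp.single i (m i)) j).descFactorial (m j)
            = (s j).descFactorial (m j) := by
          intro j hj
          have : j ≠ i := by rintro rfl; exact hiF hj
          simp [Finsupp.tsub_apply, Finsupp.single_apply, this.symm]
        rw [Finset.prod_congr rfl hval]
        push_cast
        ring

lemma pd_monomial (m : Fin n → ℕ) (s : Fin n →₀ ℕ) (c : K) :
    pd m (monomial s c)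
      = monomial (s - Finsupp.equivFunOnFinite.symm m)
          (c * ((∏ i, (s i).descFactorial (m i) : ℕ) : K)) := by
  unfold pd
  rw [foldl_pderiv_monomial m _ (List.nodup_finRange n), List.toFinset_finRange]
  have hsum : (∑ i : Fin n, Finsupp.single i (m i)) = Finsupp.equivFunOnFinite.symm m := by
    ext j
    rw [Finset.sum_apply']
    simp [Finsupp.single_apply, Finset.sum_ite_eq']
  rw [hsum]

lemma eval_zero_pd (m : Fin n → ℕ) (f : MvPolynomial (Fin n) K) :
    eval (0 : Fin n → K) (pd m f)
      = ((∏ i, (m i).factorial : ℕ) : K) * coeff (Finsupp.equivFunOnFinite.symm m) f := by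
  induction f using MvPolynomial.induction_on' with
  | add p q hp hq => rw [pd_add, map_add, coeff_add, hp, hq, mul_add]
  | monomial s c =>
      rw [pd_monomial]
      have heval : ∀ (t : Fin n →₀ ℕ) (d : K), eval (0 : Fin n → K) (monomial t d)
          = if t = 0 then d else 0 := by
        intro t d
        rw [show (eval (0 : Fin n → K) (monomial t d)) = constantCoeff (monomial t d) by
          rw [eval_zero]]
        simp [constantCoeff_monomial, eq_comm]
      rw [heval, coeff_monomial]
      by_cases hs : s = Finsupp.equivFunOnFinite.symm m
      · rw [if_pos (by rw [hs, tsub_self]), if_pos hs]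
        have hsi : ∀ i, s i = m i := fun i => by
          rw [hs]; simp [Finsupp.coe_equivFunOnFinite_symm]
        simp only [hsi, Nat.descFactorial_self]
        ring
      · rw [if_neg hs]
        by_cases hle : s - Finsupp.equivFunOnFinite.symm m = 0
        · rw [if_pos hle]
          have hle' : ∀ i, s i ≤ m i := by
            intro i
            have := tsub_eq_zero_iff_le.mp hle
            have h2 := this i
            simpa [Finsupp.coe_equivFunOnFinite_symm] using h2
          have : ∃ i, s i < m i := by
            by_contra hcon
            push_neg at hcon
            apply hs
            ext i
            exact le_antisymm (hle' i) (by simpa using hcon i)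
          obtain ⟨i, hi⟩ := this
          have : (s i).descFactorial (m i) = 0 := Nat.descFactorial_eq_zero_iff_lt.mpr hi
          rw [Finset.prod_eq_zero (Finset.mem_univ i) this]
          simp
        · rw [if_neg hle, mul_zero]

end Aux

section SpanXPow

variable {K : Type*} [CommRing K] {n : ℕ}

lemma mem_span_Xpow_iff (e : Fin n → ℕ) (f : MvPolynomial (Fin n) K) :
    f ∈ Ideal.span (Set.range fun i => (X i : MvPolynomial (Fin n) K) ^ e i)
      ↔ ∀ m : Fin n →₀ ℕ, (∀ i, m i < e i) → coeff m f = 0 := by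
  constructor
  · intro hf m hm
    have hf' : f ∈ Submodule.span (MvPolynomial (Fin n) K)
        (Set.range fun i => (X i : MvPolynomial (Fin n) K) ^ e i) := hf
    rw [Submodule.mem_span_range_iff_exists_fun] at hf'
    obtain ⟨c, hc⟩ := hf'
    rw [← hc]
    rw [show (∑ i, c i • (X i : MvPolynomial (Fin n) K) ^ e i)
        = ∑ i, c i * (X i) ^ e i by simp [smul_eq_mul]]
    rw [coeff_sum]
    apply Finset.sum_eq_zero
    intro i _
    rw [X_pow_eq_monomial, coeff_mul_monomial']
    rw [if_neg]
    intro hle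
    exact absurd (Finsupp.single_le_iff.mp hle) (not_le.mpr (hm i))
  · intro h
    rw [← support_sum_monomial_coeff f]
    apply Ideal.sum_mem
    intro v hv
    have hv' : coeff v f ≠ 0 := mem_support_iff.mp hv
    have : ∃ i, e i ≤ v i := by
      by_contra hcon
      push_neg at hcon
      exact hv' (h v hcon)
    obtain ⟨i, hi⟩ := this
    have hsplit : monomial v (coeff v f)
        = (X i : MvPolynomial (Fin n) K) ^ e i
            * monomial (v - Finsupp.single i (e i)) (coeff v f) := by
      rw [X_pow_eq_monomial, monomial_mul, one_mul,
        add_tsub_cancel_of_le (Finsupp.single_le_iff.mpr hi)]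
    rw [hsplit]
    exact Ideal.mul_mem_right _ _ (Ideal.subset_span ⟨i, rfl⟩)

/-- The shift automorphism `xᵢ ↦ xᵢ + aᵢ`. -/
noncomputable def shiftE (a : Fin n → K) :
    MvPolynomial (Fin n) K ≃ₐ[K] MvPolynomial (Fin n) K :=
  AlgEquiv.ofAlgHom (aeval fun i => X i + C (a i)) (aeval fun i => X i - C (a i))
    (by apply MvPolynomial.algHom_ext; intro i
        simp [algebraMap_eq])
    (by apply MvPolynomial.algHom_ext; intro i
        simp [algebraMap_eq])

@[simp] lemma shiftE_X (a : Fin n → K) (i : Fin n) :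
    shiftE a (X i) = X i + C (a i) := by
  simp [shiftE]

@[simp] lemma shiftE_C (a : Fin n → K) (c : K) :
    shiftE a (C c) = C c := by
  simp [shiftE, algebraMap_eq]

lemma pderiv_shiftE (a : Fin n → K) (i : Fin n) (f : MvPolynomial (Fin n) K) :
    pderiv i (shiftE a f) = shiftE a (pderiv i f) := by
  induction f using MvPolynomial.induction_on with
  | C c => simp
  | add p q hp hq => simp [map_add, hp, hq]
  | mul_X p j hp =>
      rw [map_mul, pderiv_mul, pderiv_mul, map_add, map_mul, map_mul, hp, shiftE_X]
      have h1 : pderiv i (X j + C (a j)) = pderiv i (X j) := by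
        rw [map_add, pderiv_C, add_zero]
      have h2 : (pderiv i (X j) : MvPolynomial (Fin n) K)
          = (shiftE a) (pderiv i (X j)) := by
        rcases eq_or_ne j i with rfl | hne
        · simp
        · simp [hne]
      rw [h1, ← h2]

lemma pd_shiftE (m : Fin n → ℕ) (a : Fin n → K) (f : MvPolynomial (Fin n) K) :
    pd m (shiftE a f) = shiftE a (pd m f) := by
  have hiter : ∀ (i : Fin n) (k : ℕ) (g : MvPolynomial (Fin n) K),
      (fun h => pderiv i h)^[k] (shiftE a g) = shiftE a ((fun h => pderiv i h)^[k] g) := by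
    intro i k
    induction k with
    | zero => intro g; simp
    | succ k ih =>
        intro g
        rw [Function.iterate_succ_apply', Function.iterate_succ_apply', ih, pderiv_shiftE]
  unfold pd
  generalize (List.finRange n) = L
  induction L generalizing f with
  | nil => simp
  | cons i L ih => rw [List.foldl_cons, List.foldl_cons, hiter, ih]

lemma eval_zero_shiftE (a : Fin n → K) (f : MvPolynomial (Fin n) K) :
    eval (0 : Fin n → K) (shiftE a f) = eval a f := by
  induction f using MvPolynomial.induction_on with
  | C c => simp only [shiftE_C, eval_C]
  | add p q hp hq => simp only [map_add, hp, hq]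
  | mul_X p j hp =>
      simp only [map_mul, shiftE_X, map_add, eval_X, eval_C, hp, Pi.zero_apply, zero_add]

lemma mem_span_iff_shift (a : Fin n → K) (S : Set (MvPolynomial (Fin n) K))
    (f : MvPolynomial (Fin n) K) :
    f ∈ Ideal.span S ↔ shiftE a f ∈ Ideal.span ((shiftE a) '' S) := by
  rw [← Ideal.map_span (shiftE a)]
  constructor
  · intro hf
    exact Ideal.mem_map_of_mem _ hf
  · intro hf
    rw [Ideal.mem_map_iff_of_surjective _ (shiftE a).surjective] at hf
    obtain ⟨g, hg, hgf⟩ := hf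
    rwa [(shiftE a).injective hgf] at hg

end SpanXPow

section LemB

variable {K : Type*} [CommRing K] [CharZero K] [NoZeroDivisors K] {n : ℕ}

lemma lemB (a : Fin n → K) (e : Fin n → ℕ) (f : MvPolynomial (Fin n) K) :
    f ∈ Ideal.span (Set.range fun i => (X i - C (a i)) ^ e i)
      ↔ ∀ m : Fin n → ℕ, (∀ i, m i < e i) → eval a (pd m f) = 0 := by
  rw [mem_span_iff_shift a]
  have himg : (shiftE a) '' (Set.range fun i => (X i - C (a i)) ^ e i)
      = Set.range fun i => (X i : MvPolynomial (Fin n) K) ^ e i := by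
    rw [← Set.range_comp]
    apply congrArg
    funext i
    simp [Function.comp, map_pow]
  rw [himg, mem_span_Xpow_iff]
  have key : ∀ m : Fin n → ℕ,
      eval a (pd m f)
        = ((∏ i, (m i).factorial : ℕ) : K) * coeff (Finsupp.equivFunOnFinite.symm m) (shiftE a f) := by
    intro m
    rw [← eval_zero_pd, pd_shiftE, eval_zero_shiftE]
  have hfac : ∀ m : Fin n → ℕ, ((∏ i, (m i).factorial : ℕ) : K) ≠ 0 := by
    intro m
    exact Nat.cast_ne_zero.mpr
      (Finset.prod_ne_zero_iff.mpr fun i _ => (Nat.factorial_pos (m i)).ne')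
  constructor
  · intro h m hm
    rw [key m, h _ (by intro i; simpa using hm i), mul_zero]
  · intro h m hm
    have := h (⇑m) (fun i => hm i)
    rw [key] at this
    rcases mul_eq_zero.mp this with h0 | h0
    · exact absurd h0 (hfac _)
    · rwa [Finsupp.equivFunOnFinite_symm_coe] at h0

end LemB

section LemA

variable {K : Type*} [Field K] {n : ℕ}

lemma span_mul_helper {R : Type*} [CommRing R] {ι : Type*} (g : ι → R) (I : Ideal R)
    (c : R) (hg : ∀ i, c * g i ∈ I) {f : R} (hf : f ∈ Ideal.span (Set.range g)) :
    c * f ∈ I := by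
  induction hf using Submodule.span_induction with
  | mem x hx => obtain ⟨i, rfl⟩ := hx; exact hg i
  | zero => simp
  | add x y _ _ hx hy => rw [mul_add]; exact I.add_mem hx hy
  | smul r x _ hx =>
      rw [smul_eq_mul, show c * (r * x) = r * (c * x) by ring]
      exact I.mul_mem_left r hx

lemma lemA_aux : ∀ (N : ℕ) (A : Fin n → Finset K), (∑ i, (A i).card ≤ N) →
    ∀ (ν : Fin n → K → ℕ) (f : MvPolynomial (Fin n) K),
    (∀ a : Fin n → K, (∀ i, a i ∈ A i) →
      f ∈ Ideal.span (Set.range fun i => (X i - C (a i)) ^ ν i (a i))) →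
    f ∈ Ideal.span (Set.range fun i => ∏ b ∈ A i, (X i - C b) ^ ν i b) := by
  classical
  intro N
  induction N with
  | zero =>
      intro A hA ν f hf
      rcases isEmpty_or_nonempty (Fin n) with hn | hn
      · have h1 : (Set.range fun i : Fin n => ∏ b ∈ A i, (X i - C b) ^ ν i b)
            = (∅ : Set (MvPolynomial (Fin n) K)) := Set.range_eq_empty _
        have h2 : (Set.range fun i : Fin n =>
            ((X i - C ((fun j : Fin n => (isEmptyElim j : K)) i))
              ^ ν i ((fun j : Fin n => (isEmptyElim j : K)) i) : MvPolynomial (Fin n) K))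
            = (∅ : Set (MvPolynomial (Fin n) K)) := Set.range_eq_empty _
        rw [h1]
        have := hf (fun j => isEmptyElim j) (fun j => isEmptyElim j)
        rwa [h2] at this
      · obtain ⟨i⟩ := hn
        have hcard : (A i).card = 0 := by
          have h1 : (A i).card ≤ ∑ j, (A j).card :=
            Finset.single_le_sum (f := fun j => (A j).card)
              (fun j _ => Nat.zero_le _) (Finset.mem_univ i)
          omega
        have hAi : A i = ∅ := Finset.card_eq_zero.mp hcard
        have hone : (1 : MvPolynomial (Fin n) K)
            ∈ Ideal.span (Set.range fun i => ∏ b ∈ A i, (X i - C b) ^ ν i b) := by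
          apply Ideal.subset_span
          exact ⟨i, by simp [hAi]⟩
        exact Ideal.eq_top_iff_one _ |>.mpr hone ▸ Submodule.mem_top
  | succ N ih =>
      intro A hA ν f hf
      by_cases hemp : ∃ i, A i = ∅
      · obtain ⟨i, hAi⟩ := hemp
        have hone : (1 : MvPolynomial (Fin n) K)
            ∈ Ideal.span (Set.range fun i => ∏ b ∈ A i, (X i - C b) ^ ν i b) := by
          apply Ideal.subset_span
          exact ⟨i, by simp [hAi]⟩
        exact Ideal.eq_top_iff_one _ |>.mpr hone ▸ Submodule.mem_top
      push_neg at hemp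
      by_cases hsmall : ∀ i, (A i).card ≤ 1
      · -- all singletons
        have hsingle : ∀ i, ∃ b, A i = {b} := by
          intro i
          apply Finset.card_eq_one.mp
          have h1 : 1 ≤ (A i).card :=
            Finset.card_pos.mpr (hemp i)
          have := hsmall i
          omega
        choose b hb using hsingle
        have hmem : ∀ i, b i ∈ A i := fun i => by
          rw [hb i]; exact Finset.mem_singleton_self _
        rw [show (fun i => ∏ c ∈ A i, ((X i - C c) ^ ν i c : MvPolynomial (Fin n) K))
            = (fun i => (X i - C (b i)) ^ ν i (b i)) from
          funext fun i => by rw [hb i, Finset.prod_singleton]]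
        exact hf b hmem
      · push_neg at hsmall
        obtain ⟨i, hi2⟩ := hsmall
        obtain ⟨b, hbmem⟩ := Finset.card_pos.mp (by omega : 0 < (A i).card)
        set J : Ideal (MvPolynomial (Fin n) K) :=
          Ideal.span (Set.range fun j => ∏ c ∈ A j, (X j - C c) ^ ν j c) with hJ
        set p : MvPolynomial (Fin n) K := (X i - C b) ^ ν i b with hp
        set q : MvPolynomial (Fin n) K := ∏ c ∈ (A i).erase b, (X i - C c) ^ ν i c with hq
        have hpq : p * q = ∏ c ∈ A i, (X i - C c) ^ ν i c := by
          rw [hp, hq]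
          exact Finset.mul_prod_erase (A i) (fun c => (X i - C c) ^ ν i c) hbmem
        have hcop : IsCoprime p q := by
          apply IsCoprime.pow_left
          apply IsCoprime.prod_right
          intro c hc
          apply IsCoprime.pow_right
          have hne : c ≠ b := (Finset.mem_erase.mp hc).1
          have hcb : c - b ≠ 0 := sub_ne_zero.mpr hne
          refine ⟨C ((c - b)⁻¹), -(C ((c - b)⁻¹)), ?_⟩
          have hd : (X i - C b) - (X i - C c) = C (c - b) := by
            rw [C_sub]; ring
          rw [neg_mul, ← sub_eq_add_neg, ← mul_sub, hd, ← C_mul,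
            inv_mul_cancel₀ hcb, C_1]
        obtain ⟨u, v, huv⟩ := hcop
        -- sums over updated families
        have hsum_split : ∑ j, (A j).card
            = (A i).card + ∑ j ∈ Finset.univ.erase i, (A j).card :=
          (Finset.add_sum_erase Finset.univ (fun j => (A j).card) (Finset.mem_univ i)).symm
        have hsum_upd : ∀ (s : Finset K), ∑ j, ((Function.update A i s) j).card
            = s.card + ∑ j ∈ Finset.univ.erase i, (A j).card := by
          intro s
          rw [← Finset.add_sum_erase Finset.univ _ (Finset.mem_univ i)]
          rw [Function.update_self]
          congr 1
          apply Finset.sum_congr rfl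
          intro j hj
          rw [Function.update_of_ne (Finset.mem_erase.mp hj).1]
        -- f in J(A'') where A'' replaces A i by {b}
        have hf2 : f ∈ Ideal.span (Set.range fun j =>
            ∏ c ∈ (Function.update A i {b}) j, (X j - C c) ^ ν j c) := by
          apply ih (Function.update A i {b})
          · rw [hsum_upd]
            simp only [Finset.card_singleton]
            omega
          · intro a ha
            apply hf a
            intro j
            rcases eq_or_ne j i with rfl | hji
            · have := ha j
              rw [Function.update_self] at this
              rw [Finset.mem_singleton.mp this]
              exact hbmem
            · have := ha j
              rwa [Function.update_of_ne hji] at this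
        -- f in J(A') where A' replaces A i by (A i).erase b
        have hf1 : f ∈ Ideal.span (Set.range fun j =>
            ∏ c ∈ (Function.update A i ((A i).erase b)) j, (X j - C c) ^ ν j c) := by
          apply ih (Function.update A i ((A i).erase b))
          · rw [hsum_upd]
            have : ((A i).erase b).card = (A i).card - 1 :=
              Finset.card_erase_of_mem hbmem
            omega
          · intro a ha
            apply hf a
            intro j
            rcases eq_or_ne j i with rfl | hji
            · have := ha j
              rw [Function.update_self] at this
              exact Finset.mem_of_mem_erase this
            · have := ha j
              rwa [Function.update_of_ne hji] at this
        have hqf : q * f ∈ J := by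
          apply span_mul_helper _ _ _ _ hf2
          intro j
          rcases eq_or_ne j i with rfl | hji
          · rw [Function.update_self, Finset.prod_singleton]
            rw [show q * ((X j - C b) ^ ν j b) = p * q from mul_comm _ _, hpq]
            exact Ideal.subset_span ⟨j, rfl⟩
          · rw [Function.update_of_ne hji]
            exact Ideal.mul_mem_left _ _ (Ideal.subset_span ⟨j, rfl⟩)
        have hpf : p * f ∈ J := by
          apply span_mul_helper _ _ _ _ hf1
          intro j
          rcases eq_or_ne j i with rfl | hji
          · rw [Function.update_self]
            rw [show p * (∏ c ∈ (A j).erase b, (X j - C c) ^ ν j c) = p * q from rfl, hpq]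
            exact Ideal.subset_span ⟨j, rfl⟩
          · rw [Function.update_of_ne hji]
            exact Ideal.mul_mem_left _ _ (Ideal.subset_span ⟨j, rfl⟩)
        have hfeq : f = u * (p * f) + v * (q * f) := by
          have h2 : u * (p * f) + v * (q * f) = (u * p + v * q) * f := by ring
          rw [h2, huv, one_mul]
        rw [hJ] at hqf hpf
        rw [hfeq]
        exact Ideal.add_mem _ (Ideal.mul_mem_left _ u hpf) (Ideal.mul_mem_left _ v hqf)

end LemA

/-- With `H_i(x_i) = ∏_{a ∈ A_i} (x_i − a)^{ν_i(a)}`, a polynomial `f` belongs to the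
ideal `(H₁, …, H_n)` iff all mixed partial derivatives `∂^m f` with `m_i < ν_i(a_i)`
vanish at every grid point `a ∈ A₁ × ⋯ × A_n`. -/
theorem stmt8 {K : Type*} [Field K] [CharZero K] {n : ℕ}
    (A : Fin n → Finset K) (ν : Fin n → K → ℕ) (hν : ∀ i, ∀ a ∈ A i, 0 < ν i a)
    (f : MvPolynomial (Fin n) K) :
    f ∈ Ideal.span (Set.range fun i : Fin n =>
        ∏ a ∈ A i, (MvPolynomial.X i - MvPolynomial.C a) ^ ν i a) ↔
      ∀ a : Fin n → K, (∀ i, a i ∈ A i) →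
        ∀ m : Fin n → ℕ, (∀ i, m i < ν i (a i)) →
          MvPolynomial.eval a (pd m f) = 0 := by
  classical
  constructor
  · intro hf a ha
    rw [← lemB a (fun i => ν i (a i)) f]
    -- J(A) ⊆ I_a
    refine Ideal.span_le.mpr ?_ hf
    rintro _ ⟨i, rfl⟩
    show (∏ c ∈ A i, ((X i - C c) ^ ν i c : MvPolynomial (Fin n) K)) ∈ _
    have heq : (∏ c ∈ A i, ((X i - C c) ^ ν i c : MvPolynomial (Fin n) K))
        = (X i - C (a i)) ^ ν i (a i) * ∏ c ∈ (A i).erase (a i), (X i - C c) ^ ν i c :=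
      (Finset.mul_prod_erase (A i) _ (ha i)).symm
    rw [heq]
    exact SetLike.mem_coe.mpr
      (Ideal.mul_mem_right _ _ (Ideal.subset_span ⟨i, rfl⟩))
  · intro h
    apply lemA_aux (∑ i, (A i).card) A le_rfl ν f
    intro a ha
    rw [lemB a (fun i => ν i (a i)) f]
    exact h a ha
end

section
/- With H_i(x_i) = ∏_{a ∈ A_i}(x_i − a)^{ν_i(a)} and g ∈ k[x₁,…,x_n], perform the successive Euclidean divisions g = H₁q₁ + r₁, r₁ = H₂q₂ + r₂, …, r_{n−1} = H_n q_n + r_n, where division by H_i is with respect to the variable x_i so that deg_{x_j} r_i < deg H_j for j ≤ i. Then r_n lies in V(A, ν) and ∂^m r_n(a) = ∂^m g(a) for all a ∈ A₁×…×A_n and all multi-indices m with 0 ≤ m_i ≤ ν_i(a_i) − 1; i.e., r_n is the Hermite interpolant of g and the interpolation remainder equals ∑_{i=1}^n H_i q_i. -/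
open MvPolynomial

section Aux

variable {K : Type*} [CommRing K] {n : ℕ}

lemma iter_pderiv_sub (i : Fin n) (k : ℕ) (p q : MvPolynomial (Fin n) K) :
    (fun h => pderiv i h)^[k] (p - q)
      = (fun h => pderiv i h)^[k] p - (fun h => pderiv i h)^[k] q := by
  induction k generalizing p q with
  | zero => simp
  | succ k ih =>
    simp only [Function.iterate_succ_apply, map_sub]
    exact ih _ _

lemma pd_sub (m : Fin n → ℕ) (p q : MvPolynomial (Fin n) K) :
    pd m (p - q) = pd m p - pd m q := by
  unfold pd
  generalize List.finRange n = l
  induction l generalizing p q with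
  | nil => simp
  | cons j t ih =>
    simp only [List.foldl_cons]
    rw [iter_pderiv_sub, ih]

lemma dvd_pderiv_ne {i j : Fin n} (h : j ≠ i) (c : K) (s : ℕ) (p : MvPolynomial (Fin n) K)
    (hd : (X i - C c) ^ s ∣ p) : (X i - C c) ^ s ∣ pderiv j p := by
  obtain ⟨u, rfl⟩ := hd
  rw [pderiv_mul]
  have h0 : (pderiv j) ((X i - C c : MvPolynomial (Fin n) K) ^ s) = 0 := by
    rw [Derivation.leibniz_pow]
    simp [pderiv_X, h]
  rw [h0, zero_mul, zero_add]
  exact Dvd.intro _ rfl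

lemma dvd_pderiv_self (i : Fin n) (c : K) (s : ℕ) (p : MvPolynomial (Fin n) K)
    (hd : (X i - C c) ^ s ∣ p) : (X i - C c) ^ (s - 1) ∣ pderiv i p := by
  obtain ⟨u, rfl⟩ := hd
  rw [pderiv_mul, Derivation.leibniz_pow]
  have h1 : (pderiv i) (X i - C c : MvPolynomial (Fin n) K) = 1 := by
    simp [pderiv_X]
  rw [h1, smul_eq_mul, mul_one]
  refine dvd_add ?_ ((pow_dvd_pow _ (Nat.sub_le s 1)).mul_right _)
  rw [nsmul_eq_mul]
  exact (dvd_mul_left _ _).mul_right _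

lemma dvd_iter_ne {i j : Fin n} (h : j ≠ i) (c : K) (k s : ℕ) (p : MvPolynomial (Fin n) K)
    (hd : (X i - C c) ^ s ∣ p) : (X i - C c) ^ s ∣ (fun h => pderiv j h)^[k] p := by
  induction k with
  | zero => simpa
  | succ k ih =>
    rw [Function.iterate_succ_apply']
    exact dvd_pderiv_ne h c s _ ih

lemma dvd_iter_self (i : Fin n) (c : K) (k s : ℕ) (p : MvPolynomial (Fin n) K)
    (hd : (X i - C c) ^ s ∣ p) : (X i - C c) ^ (s - k) ∣ (fun h => pderiv i h)^[k] p := by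
  induction k with
  | zero => simpa
  | succ k ih =>
    rw [Function.iterate_succ_apply', show s - (k + 1) = s - k - 1 by omega]
    exact dvd_pderiv_self i c (s - k) _ ih

lemma dvd_foldl (i : Fin n) (c : K) (m : Fin n → ℕ) (l : List (Fin n)) (s : ℕ)
    (p : MvPolynomial (Fin n) K) (hp : (X i - C c) ^ s ∣ p) :
    (X i - C c) ^ (s - (l.map fun j => if j = i then m j else 0).sum)
      ∣ l.foldl (fun g j => (fun h => pderiv j h)^[m j] g) p := by
  induction l generalizing s p with
  | nil => simpa
  | cons j t ih =>
    simp only [List.foldl_cons, List.map_cons, List.sum_cons]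
    rw [← Nat.sub_sub]
    apply ih
    by_cases hj : j = i
    · subst hj
      simpa using dvd_iter_self j c (m j) s p hp
    · simpa [hj] using dvd_iter_ne hj c (m j) s p hp

lemma ite_sum_finRange {n : ℕ} (i : Fin n) (m : Fin n → ℕ) :
    ((List.finRange n).map fun j => if j = i then m j else 0).sum = m i := by
  have key : ∀ (l : List (Fin n)), l.Nodup → i ∈ l →
      (l.map fun j => if j = i then m j else 0).sum = m i := by
    intro l
    induction l with
    | nil => simp
    | cons j t ih =>
      intro hnd hmem
      simp only [List.map_cons, List.sum_cons]
      rcases List.mem_cons.mp hmem with rfl | h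
      · have h0 : (t.map fun j' => if j' = i then m j' else 0).sum = 0 := by
          apply List.sum_eq_zero
          intro x hx
          obtain ⟨j', hj', rfl⟩ := List.mem_map.mp hx
          rw [if_neg]
          rintro rfl
          exact (List.nodup_cons.mp hnd).1 hj'
        simp [h0]
      · have hji : j ≠ i := by
          rintro rfl
          exact (List.nodup_cons.mp hnd).1 h
        rw [if_neg hji, zero_add]
        exact ih (List.nodup_cons.mp hnd).2 h
  exact key _ (List.nodup_finRange n) (List.mem_finRange i)

lemma dvd_pd (i : Fin n) (c : K) (m : Fin n → ℕ) (s : ℕ) (p : MvPolynomial (Fin n) K)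
    (hp : (X i - C c) ^ s ∣ p) : (X i - C c) ^ (s - m i) ∣ pd m p := by
  have := dvd_foldl i c m (List.finRange n) s p hp
  rwa [ite_sum_finRange] at this

end Aux

/-- Successive Euclidean divisions by `H_i(x_i) = ∏_{a ∈ A_i}(x_i − a)^{ν_i(a)}`:
if `r 0 = g`, `r (i+1) = r i − H_i q_i`, with `deg_{x_j} r (i+1) < deg H_j` for all
`j ≤ i`, then the final remainder `r n` lies in `V(A, ν)`, has the same mixed partial
derivatives as `g` at all grid points up to the prescribed orders (i.e. `r n` is the
Hermite interpolant of `g`), and the interpolation remainder is `g − r n = ∑ H_i q_i`. -/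
theorem stmt10 {K : Type*} [Field K] [CharZero K] {n : ℕ}
    (A : Fin n → Finset K) (ν : Fin n → K → ℕ) (hν : ∀ i, ∀ a ∈ A i, 0 < ν i a)
    (g : MvPolynomial (Fin n) K)
    (q : Fin n → MvPolynomial (Fin n) K) (r : ℕ → MvPolynomial (Fin n) K)
    (hr0 : r 0 = g)
    (hstep : ∀ i : Fin n,
      r ((i : ℕ) + 1) = r (i : ℕ) - (∏ a ∈ A i, (X i - C a) ^ ν i a) * q i)
    (hdeg : ∀ i : Fin n, ∀ j : Fin n, j ≤ i →
      degreeOf j (r ((i : ℕ) + 1)) < ∑ a ∈ A j, ν j a) :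
    (∀ j, degreeOf j (r n) < ∑ a ∈ A j, ν j a) ∧
    (∀ a : Fin n → K, (∀ i, a i ∈ A i) →
      ∀ m : Fin n → ℕ, (∀ i, m i < ν i (a i)) →
        eval a (pd m (r n)) = eval a (pd m g)) ∧
    g - r n = ∑ i : Fin n, (∏ a ∈ A i, (X i - C a) ^ ν i a) * q i := by
  -- Part 3: telescoping
  have h3 : g - r n = ∑ i : Fin n, (∏ a ∈ A i, (X i - C a) ^ ν i a) * q i := by
    calc g - r n = r 0 - r n := by rw [hr0]
      _ = ∑ k ∈ Finset.range n, (r k - r (k + 1)) := (Finset.sum_range_sub' r n).symm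
      _ = ∑ i : Fin n, (r (i : ℕ) - r ((i : ℕ) + 1)) :=
          (Fin.sum_univ_eq_sum_range (fun k => r k - r (k + 1)) n).symm
      _ = ∑ i : Fin n, (∏ a ∈ A i, (X i - C a) ^ ν i a) * q i := by
          refine Finset.sum_congr rfl fun i _ => ?_
          rw [hstep i]; ring
  refine ⟨?_, ?_, h3⟩
  · -- Part 1: degree bounds
    intro j
    have hn : 0 < n := j.pos
    have hi : n - 1 < n := by omega
    have := hdeg ⟨n - 1, hi⟩ j (by
      rw [Fin.le_def]
      exact Nat.le_sub_one_of_lt j.isLt)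
    simpa [Nat.sub_add_cancel hn] using this
  · -- Part 2: interpolation
    intro a ha m hm
    have key : eval a (pd m (g - r n)) = 0 := by
      rw [h3]
      -- pd of a finite sum
      have hsum : pd m (∑ i : Fin n, (∏ a ∈ A i, (X i - C a) ^ ν i a) * q i)
          = ∑ i : Fin n, pd m ((∏ a ∈ A i, (X i - C a) ^ ν i a) * q i) := by
        have pd_zero : pd m (0 : MvPolynomial (Fin n) K) = 0 := by
          have := pd_sub m (0 : MvPolynomial (Fin n) K) 0
          simpa using this
        have pd_add : ∀ p q : MvPolynomial (Fin n) K, pd m (p + q) = pd m p + pd m q := by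
          intro p q
          have := pd_sub m (p + q) q
          have h2 := pd_sub m p p
          simp only [sub_self] at h2
          rw [add_sub_cancel_right] at this
          rw [eq_sub_iff_add_eq] at this
          exact this.symm
        classical
        induction (Finset.univ : Finset (Fin n)) using Finset.induction_on with
        | empty => simpa using pd_zero
        | insert _ _ h ih =>
          rw [Finset.sum_insert h, Finset.sum_insert h, pd_add, ih]
      rw [hsum, map_sum]
      refine Finset.sum_eq_zero fun i _ => ?_
      have hdvd : (X i - C (a i)) ^ ν i (a i) ∣ (∏ b ∈ A i, (X i - C b) ^ ν i b) * q i :=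
        (Finset.dvd_prod_of_mem (fun b => (X i - C b) ^ ν i b) (ha i)).mul_right _
      have hpd := dvd_pd i (a i) m (ν i (a i)) _ hdvd
      have hlin : (X i - C (a i)) ∣ pd m ((∏ b ∈ A i, (X i - C b) ^ ν i b) * q i) :=
        dvd_trans (dvd_pow_self _ (by have := hm i; omega : ν i (a i) - m i ≠ 0)) hpd
      obtain ⟨u, hu⟩ := hlin
      rw [hu]
      simp
    rw [pd_sub, map_sub, sub_eq_zero] at key
    exact key.symm
end

section
/- Define the univariate Hermite basis functions H_a^k(x) = H_a(x) ((x−a)^k / k!) ∑_{t=0}^{ν(a)−k−1} ((x−a)^t / t!) (d^t/dx^t)(1/H_a)(a), where H_a(x) = ∏_{c ∈ A, c ≠ a} ((x−c)/(a−c))^{ν(c)}. Then for all a, b ∈ A and all 0 ≤ k ≤ ν(a)−1, 0 ≤ m ≤ ν(b)−1, one has (d^m/dx^m) H_a^k (b) = δ_{ab} δ_{km} (Kronecker deltas). -/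
/-- Spitzbart's fundamental factor `H_a(x) = ∏_{c ∈ A, c ≠ a} ((x−c)/(a−c))^{ν(c)}`. -/
noncomputable def Ha (A : Finset ℝ) (ν : ℝ → ℕ) (a x : ℝ) : ℝ :=
  ∏ c ∈ A.erase a, ((x - c) / (a - c)) ^ ν c

/-- Spitzbart's univariate Hermite basis function
`H_a^k(x) = H_a(x) ((x−a)^k/k!) ∑_{t=0}^{ν(a)−k−1} ((x−a)^t/t!) (d^t/dx^t)(1/H_a)(a)`. -/
noncomputable def Hak (A : Finset ℝ) (ν : ℝ → ℕ) (a : ℝ) (k : ℕ) (x : ℝ) : ℝ :=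
  Ha A ν a x * ((x - a) ^ k / Nat.factorial k) *
    ∑ t ∈ Finset.range (ν a - k),
      (x - a) ^ t / Nat.factorial t * iteratedDeriv t (fun y => (Ha A ν a y)⁻¹) a

open Polynomial Finset

lemma contDiff_polyeval (p : ℝ[X]) : ContDiff ℝ (⊤:ℕ∞) fun x : ℝ => p.eval x := by
  induction p using Polynomial.induction_on' with
  | add p q hp hq => simpa using hp.add hq
  | monomial n a => simpa [Polynomial.eval_monomial] using contDiff_const.mul (contDiff_id.pow n)

lemma polyIteratedDeriv (p : ℝ[X]) (n : ℕ) :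
    iteratedDeriv n (fun x => p.eval x) = fun x => (Polynomial.derivative^[n] p).eval x := by
  induction n with
  | zero => simp
  | succ n ih =>
    rw [iteratedDeriv_succ, ih]
    funext x
    rw [Function.iterate_succ_apply', Polynomial.deriv]

lemma polyIteratedDeriv' (p : ℝ[X]) (n : ℕ) (x : ℝ) :
    iteratedDeriv n (fun x => p.eval x) x = (Polynomial.derivative^[n] p).eval x :=
  congrFun (polyIteratedDeriv p n) x

lemma derivs_eval_zero (p : ℝ[X]) (a : ℝ) (n m : ℕ) (hd : (X - C a)^n ∣ p) (hm : m < n) :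
    (Polynomial.derivative^[m] p).eval a = 0 := by
  obtain ⟨q, hq⟩ := pow_sub_dvd_iterate_derivative_of_pow_dvd m hd
  have h0 : n - m ≠ 0 := by omega
  simp [hq, h0, zero_pow h0]

lemma dvd_of_derivs (p : ℝ[X]) (a : ℝ) (n : ℕ)
    (h : ∀ m < n, (Polynomial.derivative^[m] p).eval a = 0) :
    (X - C a)^n ∣ p := by
  rcases eq_or_ne p 0 with rfl | hp
  · exact dvd_zero _
  rcases Nat.eq_zero_or_pos n with rfl | hn
  · simpa using one_dvd _
  have key : n - 1 < p.rootMultiplicity a :=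
    Polynomial.lt_rootMultiplicity_of_isRoot_iterate_derivative_of_mem_nonZeroDivisors hp
      (fun m hm => h m (by omega))
      (mem_nonZeroDivisors_of_ne_zero (by exact_mod_cast (Nat.factorial_ne_zero (n-1))))
  exact dvd_trans (pow_dvd_pow _ (by omega)) (p.pow_rootMultiplicity_dvd a)

lemma iteratedDerivWithin_of_isOpen' {s : Set ℝ} {f : ℝ → ℝ} {n : ℕ} (hs : IsOpen s)
    {x : ℝ} (hx : x ∈ s) : iteratedDerivWithin n f s x = iteratedDeriv n f x := by
  simp only [iteratedDerivWithin, iteratedDeriv, iteratedFDerivWithin_of_isOpen n hs hx]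

lemma leibnizWithin {s : Set ℝ} (hso : IsOpen s) {f g : ℝ → ℝ}
    (hf : ContDiffOn ℝ (⊤:ℕ∞) f s) (hg : ContDiffOn ℝ (⊤:ℕ∞) g s) :
    ∀ (n : ℕ), ∀ x ∈ s, iteratedDerivWithin n (fun y => f y * g y) s x =
      ∑ i ∈ Finset.range (n + 1),
        (n.choose i : ℝ) * (iteratedDerivWithin i f s x * iteratedDerivWithin (n - i) g s x) := by
  have hu : UniqueDiffOn ℝ s := hso.uniqueDiffOn
  intro n
  induction n with
  | zero => intro x hx; simp
  | succ n ih =>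
    intro x hx
    have hdf : ∀ (i : ℕ), HasDerivWithinAt (iteratedDerivWithin i f s)
        (iteratedDerivWithin (i+1) f s x) s x := by
      intro i
      have h1 : DifferentiableWithinAt ℝ (iteratedDerivWithin i f s) s x :=
        (hf.differentiableOn_iteratedDerivWithin (by exact_mod_cast WithTop.coe_lt_top _) hu) x hx
      rw [iteratedDerivWithin_succ]
      exact h1.hasDerivWithinAt
    have hdg : ∀ (i : ℕ), HasDerivWithinAt (iteratedDerivWithin i g s)
        (iteratedDerivWithin (i+1) g s x) s x := by
      intro i
      have h1 : DifferentiableWithinAt ℝ (iteratedDerivWithin i g s) s x :=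
        (hg.differentiableOn_iteratedDerivWithin (by exact_mod_cast WithTop.coe_lt_top _) hu) x hx
      rw [iteratedDerivWithin_succ]
      exact h1.hasDerivWithinAt
    have hsum : HasDerivWithinAt
        (fun y => ∑ i ∈ Finset.range (n+1),
          (n.choose i : ℝ) * (iteratedDerivWithin i f s y * iteratedDerivWithin (n-i) g s y))
        (∑ i ∈ Finset.range (n+1), (n.choose i : ℝ) *
          (iteratedDerivWithin (i+1) f s x * iteratedDerivWithin (n-i) g s x +
           iteratedDerivWithin i f s x * iteratedDerivWithin (n-i+1) g s x)) s x := by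
      apply HasDerivWithinAt.fun_sum
      intro i _
      exact ((hdf i).mul (hdg (n-i))).const_mul ((n.choose i : ℝ))
    rw [iteratedDerivWithin_succ,
      derivWithin_congr (fun y hy => ih y hy) (ih x hx), hsum.derivWithin (hu x hx)]
    have key := Finset.sum_choose_succ_mul
      (fun i j => iteratedDerivWithin i f s x * iteratedDerivWithin j g s x) n
    simp only [mul_add, Finset.sum_add_distrib]
    rw [key]
    rw [add_comm]
    congr 1
    · apply Finset.sum_congr rfl
      intro i hi
      have : n + 1 - i = n - i + 1 := by
        have := Finset.mem_range.mp hi; omega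
      rw [this]

lemma iterate_derivative_add' (p q : Polynomial ℝ) (m : ℕ) :
    Polynomial.derivative^[m] (p + q) =
      Polynomial.derivative^[m] p + Polynomial.derivative^[m] q := by
  induction m with
  | zero => rfl
  | succ m ih => simp [Function.iterate_succ_apply', ih]

/-- Duality of the univariate Hermite basis functions:
`(d^m/dx^m) H_a^k (b) = δ_{ab} δ_{km}` for all `a, b ∈ A`, `k < ν(a)`, `m < ν(b)`. -/
theorem stmt13 (A : Finset ℝ) (ν : ℝ → ℕ) (hν : ∀ a ∈ A, 0 < ν a)
    (a b : ℝ) (ha : a ∈ A) (hb : b ∈ A) (k m : ℕ)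
    (hk : k < ν a) (hm : m < ν b) :
    iteratedDeriv m (Hak A ν a k) b = if a = b ∧ k = m then 1 else 0 := by
  classical
  set cc : ℕ → ℝ := fun t => iteratedDeriv t (fun y => (Ha A ν a y)⁻¹) a with hcc
  set n : ℕ := ν a - k with hn
  set P : ℝ[X] := ∏ c ∈ A.erase a, (C ((a - c)⁻¹) * (X - C c)) ^ ν c with hPdef
  set T : ℝ[X] := ∑ t ∈ Finset.range n, C (cc t / t.factorial) * (X - C a) ^ t with hTdef
  set Q : ℝ[X] := P * (C ((k.factorial : ℝ))⁻¹ * (X - C a) ^ k) * T with hQdef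
  have hP : ∀ x, P.eval x = Ha A ν a x := by
    intro x
    simp [hPdef, Ha, Polynomial.eval_prod, div_eq_inv_mul]
  have hQ : ∀ x, Q.eval x = Hak A ν a k x := by
    intro x
    have h1 : T.eval x = ∑ t ∈ Finset.range n, (x - a) ^ t / t.factorial * cc t := by
      rw [hTdef, Polynomial.eval_finset_sum]
      refine Finset.sum_congr rfl fun t _ => ?_
      simp only [eval_mul, eval_C, eval_pow, eval_sub, eval_X]
      ring
    rw [hQdef, eval_mul, eval_mul, h1, hP x, Hak]
    simp only [eval_mul, eval_C, eval_pow, eval_sub, eval_X]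
    ring
  have hHakQ : Hak A ν a k = fun x => Q.eval x := funext fun x => (hQ x).symm
  by_cases hab : a = b
  · -- case a = b
    subst hab
    simp only [true_and]
    -- setup
    have hg_fun : (fun x => Ha A ν a x) = fun x => P.eval x := funext fun x => (hP x).symm
    have hg_cd : ContDiff ℝ (⊤:ℕ∞) (fun x => Ha A ν a x) := by
      rw [hg_fun]; exact contDiff_polyeval P
    set s : Set ℝ := {x | Ha A ν a x ≠ 0} with hsdef
    have hso : IsOpen s := by
      have : s = (fun x => Ha A ν a x) ⁻¹' ({0}ᶜ) := by
        ext x; simp [hsdef]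
      rw [this]
      exact isOpen_compl_singleton.preimage hg_cd.continuous
    have hga : Ha A ν a a = 1 := by
      refine Finset.prod_eq_one fun c hc => ?_
      have hca : c ≠ a := (Finset.mem_erase.mp hc).1
      rw [div_self (sub_ne_zero.mpr (Ne.symm hca)), one_pow]
    have has : a ∈ s := by simp [hsdef, hga]
    have hh_cd : ContDiffOn ℝ (⊤:ℕ∞) (fun y => (Ha A ν a y)⁻¹) s :=
      hg_cd.contDiffOn.inv (fun x hx => hx)
    -- Leibniz identity for g * g⁻¹ = 1 on s
    have hS : ∀ m' : ℕ, (∑ j ∈ Finset.range (m'+1), (m'.choose j : ℝ) *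
        (iteratedDeriv j (fun x => Ha A ν a x) a * cc (m'-j))) = if m' = 0 then 1 else 0 := by
      intro m'
      have hL := leibnizWithin hso hg_cd.contDiffOn hh_cd m' a has
      have he : Set.EqOn (fun y => Ha A ν a y * (Ha A ν a y)⁻¹) (fun _ => (1:ℝ)) s :=
        fun y hy => mul_inv_cancel₀ hy
      have hconst : iteratedDerivWithin m' (fun y => Ha A ν a y * (Ha A ν a y)⁻¹) s a
          = if m' = 0 then 1 else 0 := by
        rw [iteratedDerivWithin_congr he has,
          iteratedDerivWithin_of_isOpen' hso has]
        have hone : (fun _ : ℝ => (1:ℝ)) = fun x => (1 : ℝ[X]).eval x := by funext x; simp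
        rw [hone, polyIteratedDeriv]
        rcases Nat.eq_zero_or_pos m' with rfl | hpos
        · simp
        · rw [Polynomial.iterate_derivative_one hpos]
          simp [Nat.pos_iff_ne_zero.mp hpos]
      rw [hconst] at hL
      refine Eq.trans (Finset.sum_congr rfl fun j _ => ?_) hL.symm
      rw [iteratedDerivWithin_of_isOpen' hso has, iteratedDerivWithin_of_isOpen' hso has, hcc]
    -- derivatives of T at a
    have hfact_ne : ∀ t : ℕ, ((t.factorial : ℝ)) ≠ 0 :=
      fun t => by exact_mod_cast t.factorial_ne_zero
    have hT : ∀ t' < n, (Polynomial.derivative^[t'] T).eval a = cc t' := by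
      intro t' ht'
      rw [hTdef, Polynomial.iterate_derivative_sum, Polynomial.eval_finset_sum]
      rw [Finset.sum_eq_single t']
      · rw [Polynomial.iterate_derivative_C_mul, Polynomial.iterate_derivative_X_sub_pow]
        simp [Nat.descFactorial_self, Nat.sub_self]
        field_simp
      · intro t _ htne
        rw [Polynomial.iterate_derivative_C_mul, Polynomial.iterate_derivative_X_sub_pow]
        rcases lt_or_gt_of_ne htne with hlt | hgt
        · simp [Nat.descFactorial_eq_zero_iff_lt.mpr hlt]
        · have : t - t' ≠ 0 := by omega
          simp [this, zero_pow this]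
      · intro hnot
        exact absurd (Finset.mem_range.mpr ht') hnot
    -- derivatives of P*T at a
    have hPT : ∀ m' < n, (Polynomial.derivative^[m'] (P * T)).eval a
        = if m' = 0 then 1 else 0 := by
      intro m' hm'
      have h1 : (fun x => (P*T).eval x) = fun x => Ha A ν a x * (fun y => T.eval y) x := by
        funext x; simp [hP x]
      have h2 : (Polynomial.derivative^[m'] (P*T)).eval a
          = iteratedDeriv m' (fun x => (P*T).eval x) a := (polyIteratedDeriv' _ _ _).symm
      rw [h2, h1, ← iteratedDerivWithin_of_isOpen' hso has,
        leibnizWithin hso hg_cd.contDiffOn (contDiff_polyeval T).contDiffOn m' a has,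
        ← hS m']
      refine Finset.sum_congr rfl fun j hj => ?_
      have hjm : j ≤ m' := by simpa [Nat.lt_succ_iff] using Finset.mem_range.mp hj
      rw [iteratedDerivWithin_of_isOpen' hso has, iteratedDerivWithin_of_isOpen' hso has,
        polyIteratedDeriv', hT (m'-j) (by omega)]
    -- divisibility
    have hdvd : (X - C a)^n ∣ (P*T - 1) := by
      refine dvd_of_derivs _ a n fun m' hm' => ?_
      rw [Polynomial.iterate_derivative_sub, Polynomial.eval_sub, hPT m' hm']
      rcases Nat.eq_zero_or_pos m' with rfl | hpos
      · simp
      · rw [Polynomial.iterate_derivative_one hpos]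
        simp [Nat.pos_iff_ne_zero.mp hpos]
    obtain ⟨R, hR⟩ := hdvd
    have hPT1 : P * T = 1 + (X - C a)^n * R := by linear_combination hR
    have hkn : k + n = ν a := by omega
    have hQ2 : Q = C ((k.factorial : ℝ))⁻¹ * ((X - C a)^k + (X - C a)^(ν a) * R) := by
      calc Q = C ((k.factorial : ℝ))⁻¹ * ((X - C a)^k * (P * T)) := by rw [hQdef]; ring
        _ = C ((k.factorial : ℝ))⁻¹ * ((X - C a)^k * (1 + (X - C a)^n * R)) := by rw [hPT1]
        _ = C ((k.factorial : ℝ))⁻¹ * ((X - C a)^k + (X - C a)^(ν a) * R) := by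
            rw [← hkn, pow_add]; ring
    rw [hHakQ, polyIteratedDeriv', hQ2, Polynomial.iterate_derivative_C_mul,
      iterate_derivative_add' _ _ m]
    rw [Polynomial.eval_mul, Polynomial.eval_C, Polynomial.eval_add]
    rw [derivs_eval_zero ((X - C a)^(ν a) * R) a (ν a) m (dvd_mul_right _ _) hm, add_zero]
    rw [Polynomial.iterate_derivative_X_sub_pow]
    by_cases hkm : k = m
    · subst hkm
      simp [Nat.descFactorial_self, Nat.sub_self, hfact_ne k]
    · rcases lt_or_gt_of_ne hkm with hlt | hgt
      · simp [Nat.descFactorial_eq_zero_iff_lt.mpr hlt, hkm]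
      · have h0 : k - m ≠ 0 := by omega
        simp [h0, zero_pow h0, hkm]
  · -- case a ≠ b
    have hbA : b ∈ A.erase a := Finset.mem_erase.mpr ⟨fun h => hab h.symm, hb⟩
    have hdvd : (X - C b)^(ν b) ∣ Q := by
      have h1 : (C ((a - b)⁻¹) * (X - C b)) ^ ν b ∣ P := by
        rw [hPdef]; exact Finset.dvd_prod_of_mem _ hbA
      have h2 : (X - C b)^(ν b) ∣ (C ((a - b)⁻¹) * (X - C b)) ^ ν b :=
        pow_dvd_pow_of_dvd (dvd_mul_left _ _) _
      have h3 : P ∣ Q := ⟨(C ((k.factorial : ℝ))⁻¹ * (X - C a) ^ k) * T, by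
        rw [hQdef]; ring⟩
      exact (h2.trans h1).trans h3
    rw [hHakQ, polyIteratedDeriv', derivs_eval_zero Q b (ν b) m hdvd hm,
      if_neg (fun h => hab h.1)]
end
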